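/- arXiv:1906.09008 — 4 statements merged into one kernel-verified Lean document; each statement's English description precedes it below -/
import Mathlib

section
/- For h > 0 and odd j ≥ 2 (i.e., j ≥ 3 odd), the recurrence (i+j+1) I_{i,j}(h) = j h I_{i,j-2}(h) - 2 r^{i+2j+1} holds, where r = sqrt((sqrt(1+4h)-1)/2) and I_{i,j}(h) = 2 ∫_r^{√h} x^i (h-x^2)^{j/2} dx. -/
/-!
Differentiating `F x = x ^ (i + 1) * (h - x ^ 2) ^ (j / 2)` and writing `x ^ 2 = h - (h - x ^ 2)` gives
`F' = (i + j + 1) x ^ i (h - x ^ 2) ^ (j / 2) - j h x ^ i (h - x ^ 2) ^ (j / 2 - 1)`, so the recurrence is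
the fundamental theorem of calculus on `[r, √h]`. The boundary term vanishes at `√h`, and at `r` it is
`r ^ (i + 1) (r ^ 4) ^ (j / 2) = r ^ (i + 2 j + 1)` because `h - r ^ 2 = r ^ 4`.
-/

open Real intervalIntegral

lemma Real.rpow_eq_rpow_sub_one_mul {p : ℝ} (hp : p ≠ 0) (t : ℝ) : t ^ p = t ^ (p - 1) * t := by
  rcases eq_or_ne t 0 with rfl | ht
  · simp [Real.zero_rpow hp]
  · rw [← Real.rpow_add_one ht, sub_add_cancel]

lemma hasDerivAt_pow_succ_mul_rpow (i : ℕ) {h p : ℝ} (hp : 1 ≤ p) (x : ℝ) :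
    HasDerivAt (fun x : ℝ => x ^ (i + 1) * (h - x ^ 2) ^ p)
      ((i + 1 + 2 * p) * (x ^ i * (h - x ^ 2) ^ p) -
        2 * p * h * (x ^ i * (h - x ^ 2) ^ (p - 1))) x := by
  have hbase : HasDerivAt (fun x : ℝ => h - x ^ 2) (-(2 * x)) x := by
    simpa using (hasDerivAt_pow 2 x).const_sub h
  have hpow : HasDerivAt (fun x : ℝ => x ^ (i + 1)) ((i + 1 : ℝ) * x ^ i) x := by
    simpa using hasDerivAt_pow (i + 1) x
  refine (hpow.mul (hbase.rpow_const (Or.inr hp))).congr_deriv ?_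
  rw [Real.rpow_eq_rpow_sub_one_mul (by linarith) (h - x ^ 2)]
  ring

lemma continuous_pow_mul_rpow (i : ℕ) (h : ℝ) {p : ℝ} (hp : 0 ≤ p) :
    Continuous fun x : ℝ => x ^ i * (h - x ^ 2) ^ p :=
  (continuous_pow i).mul ((continuous_const.sub (continuous_pow 2)).rpow_const fun _ => Or.inr hp)

theorem integral_pow_mul_rpow_recurrence (i : ℕ) {h p : ℝ} (hp : 1 ≤ p) (a b : ℝ) :
    (i + 1 + 2 * p) * ∫ x in a..b, x ^ i * (h - x ^ 2) ^ p =
      2 * p * h * (∫ x in a..b, x ^ i * (h - x ^ 2) ^ (p - 1)) +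
        (b ^ (i + 1) * (h - b ^ 2) ^ p - a ^ (i + 1) * (h - a ^ 2) ^ p) := by
  have hint (q : ℝ) (hq : 0 ≤ q) : IntervalIntegrable (fun x : ℝ => x ^ i * (h - x ^ 2) ^ q)
      MeasureTheory.volume a b :=
    (continuous_pow_mul_rpow i h hq).intervalIntegrable a b
  have hftc := integral_eq_sub_of_hasDerivAt
    (fun x _ => hasDerivAt_pow_succ_mul_rpow i hp x)
    (((hint p (by linarith)).const_mul _).sub ((hint (p - 1) (by linarith)).const_mul _))
  rw [integral_sub ((hint p (by linarith)).const_mul _) ((hint (p - 1) (by linarith)).const_mul _),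
    integral_const_mul, integral_const_mul] at hftc
  linarith

lemma sq_add_pow_four_of_eq_sqrt {h r : ℝ} (hh : 0 ≤ h)
    (hr : r = √((√(1 + 4 * h) - 1) / 2)) : r ^ 2 + r ^ 4 = h := by
  have hs : √(1 + 4 * h) ^ 2 = 1 + 4 * h := Real.sq_sqrt (by linarith)
  have hs1 : 1 ≤ √(1 + 4 * h) := by
    rw [Real.le_sqrt zero_le_one (by linarith)]
    linarith
  have hr2 : r ^ 2 = (√(1 + 4 * h) - 1) / 2 := by
    rw [hr, Real.sq_sqrt (by linarith)]
  nlinarith [hr2, hs]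

lemma pow_succ_mul_pow_four_rpow {r : ℝ} (hr : 0 ≤ r) (i j : ℕ) :
    r ^ (i + 1) * (r ^ 4) ^ ((j : ℝ) / 2) = r ^ (i + 2 * j + 1) := by
  rw [← Real.rpow_natCast r 4, ← Real.rpow_mul hr,
    show ((4 : ℕ) : ℝ) * ((j : ℝ) / 2) = ((2 * j : ℕ) : ℝ) by push_cast; ring,
    Real.rpow_natCast, ← pow_add]
  ring_nf

theorem stmt_4_general (h : ℝ) (hh : 0 < h) (i j : ℕ) (hj3 : 3 ≤ j)
    (r : ℝ) (hr : r = Real.sqrt ((Real.sqrt (1 + 4 * h) - 1) / 2))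
    (I : ℕ → ℕ → ℝ)
    (hI : ∀ i' j', I i' j' =
      2 * ∫ x in r..(Real.sqrt h), x ^ i' * (h - x ^ 2) ^ ((j' : ℝ) / 2)) :
    ((i : ℝ) + j + 1) * I i j =
      (j : ℝ) * h * I i (j - 2) - 2 * r ^ (i + 2 * j + 1) := by
  have hp : (1 : ℝ) ≤ (j : ℝ) / 2 := by
    rw [le_div_iff₀ two_pos]
    exact_mod_cast (by omega : 1 * 2 ≤ j)
  have hrec := integral_pow_mul_rpow_recurrence i (h := h) hp r √h
  have hj2 : ((j - 2 : ℕ) : ℝ) / 2 = (j : ℝ) / 2 - 1 := by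
    rw [Nat.cast_sub (by omega)]
    ring
  have htop : √h ^ (i + 1) * (h - √h ^ 2) ^ ((j : ℝ) / 2) = 0 := by
    rw [Real.sq_sqrt hh.le, sub_self, Real.zero_rpow (by linarith), mul_zero]
  have hbot : r ^ (i + 1) * (h - r ^ 2) ^ ((j : ℝ) / 2) = r ^ (i + 2 * j + 1) := by
    rw [show h - r ^ 2 = r ^ 4 by linarith [sq_add_pow_four_of_eq_sqrt hh.le hr]]
    exact pow_succ_mul_pow_four_rpow (hr ▸ Real.sqrt_nonneg _) i j
  rw [htop, hbot] at hrec
  rw [hI, hI, hj2]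
  linear_combination 2 * hrec

theorem stmt_4 (h : ℝ) (hh : 0 < h) (i j : ℕ) (hj : Odd j) (hj3 : 3 ≤ j)
    (r : ℝ) (hr : r = Real.sqrt ((Real.sqrt (1 + 4 * h) - 1) / 2))
    (I : ℕ → ℕ → ℝ)
    (hI : ∀ i' j', I i' j' =
      2 * ∫ x in r..(Real.sqrt h), x ^ i' * (h - x ^ 2) ^ ((j' : ℝ) / 2)) :
    ((i : ℝ) + j + 1) * I i j =
      (j : ℝ) * h * I i (j - 2) - 2 * r ^ (i + 2 * j + 1) :=
  stmt_4_general h hh i j hj3 r hr I hI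
end

section
/- For h > 0: I_{2,1}(h) = (1/4) h I_{0,1}(h) + (1/2) r^7, where r = sqrt((sqrt(1+4h)-1)/2), I_{2,1}(h) = 2∫_r^{√h} x^2 (h-x^2)^{1/2} dx, and I_{0,1}(h) = 2∫_r^{√h} (h-x^2)^{1/2} dx. -/
/-!
The function `F x = x (h - x²) √(h - x²)` is an antiderivative of `h √(h - x²) - 4 x² √(h - x²)`,
so `h I₀ - 4 I₂ = F(√h) - F(r)`. At `√h` the factor `h - x²` vanishes, and at `r` the defining
relation `r² + r⁴ = h` gives `h - r² = r⁴` and `√(h - r²) = r²`, so `F(r) = r · r⁴ · r² = r⁷`.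
-/

open Real intervalIntegral

lemma hasDerivAt_mul_sub_sq_mul_sqrt {h x : ℝ} (hx : x ^ 2 < h) :
    HasDerivAt (fun x => x * ((h - x ^ 2) * √(h - x ^ 2)))
      (h * √(h - x ^ 2) - 4 * (x ^ 2 * √(h - x ^ 2))) x := by
  have hu : HasDerivAt (fun x : ℝ => h - x ^ 2) (-(2 * x)) x := by
    simpa using (hasDerivAt_pow 2 x).const_sub h
  have hsqrt : HasDerivAt (fun x => √(h - x ^ 2)) (1 / (2 * √(h - x ^ 2)) * -(2 * x)) x :=
    (hasDerivAt_sqrt (sub_pos.2 hx).ne').comp x hu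
  refine ((hasDerivAt_id' x).fun_mul (hu.fun_mul hsqrt)).congr_deriv ?_
  have hpos : 0 < √(h - x ^ 2) := sqrt_pos.2 (sub_pos.2 hx)
  have hsq : √(h - x ^ 2) ^ 2 = h - x ^ 2 := sq_sqrt (sub_pos.2 hx).le
  field_simp
  linear_combination x ^ 2 * hsq

lemma integral_sqrt_sub_sq_sub_four_mul_integral_sq_mul_sqrt {h a b : ℝ}
    (ha : -√h ≤ a) (hab : a ≤ b) (hb : b ≤ √h) :
    h * (∫ x in a..b, √(h - x ^ 2)) - 4 * ∫ x in a..b, x ^ 2 * √(h - x ^ 2) =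
      b * ((h - b ^ 2) * √(h - b ^ 2)) - a * ((h - a ^ 2) * √(h - a ^ 2)) := by
  rw [← integral_const_mul, ← integral_const_mul,
    ← integral_sub ((by fun_prop : Continuous _).intervalIntegrable _ _)
      ((by fun_prop : Continuous _).intervalIntegrable _ _)]
  refine integral_eq_sub_of_hasDerivAt_of_le hab (by fun_prop)
    (fun x hx => hasDerivAt_mul_sub_sq_mul_sqrt (sq_lt.2 ⟨ha.trans_lt hx.1, hx.2.trans_le hb⟩))
    ((by fun_prop : Continuous _).intervalIntegrable _ _)

theorem stmt_6 (h : ℝ) (hh : 0 < h)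
    (r : ℝ) (hr : r = Real.sqrt ((Real.sqrt (1 + 4 * h) - 1) / 2)) :
    (2 * ∫ x in r..(Real.sqrt h), x ^ 2 * Real.sqrt (h - x ^ 2)) =
      (1 / 4) * h * (2 * ∫ x in r..(Real.sqrt h), Real.sqrt (h - x ^ 2)) +
        (1 / 2) * r ^ 7 := by
  have hrel := sq_add_pow_four_of_eq_sqrt hh.le hr
  have hr0 : 0 ≤ r := hr ▸ sqrt_nonneg _
  have hrh : r ≤ √h := le_sqrt_of_sq_le (by nlinarith [pow_nonneg hr0 4])
  have hftc := integral_sqrt_sub_sq_sub_four_mul_integral_sq_mul_sqrt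
    ((neg_nonpos.2 (sqrt_nonneg h)).trans hr0) hrh le_rfl
  rw [sq_sqrt hh.le, sub_self, show h - r ^ 2 = (r ^ 2) ^ 2 by linarith,
    sqrt_sq (sq_nonneg r)] at hftc
  linear_combination (-1 / 2) * hftc
end

section
/- Let F(u) = ∫_0^{1/sqrt(1+u^2)} sqrt(1-t^2) dt. For any real constants λ_0, λ_1, λ_2, λ_3, λ_4, the function M(u) = λ_4 u^4 + λ_3 u^3 + λ_2 u^2 + λ_1 u + λ_0 (u^4 + u^2) F(u) has at most 4 zeros (counted with multiplicity) in (0, ∞). -/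
/-!
Where `λ₀ = 0`, `M` is a polynomial with four terms, which by Descartes' rule of signs has at
most three positive roots. Otherwise divide by `u⁴ + u² = u²(1 + u²)`: since
`F'(u) = -u² / (1 + u²)²`, the derivative of `M(u) / (u⁴ + u²)` is `N(u) / (u²(1 + u²)²)` with
`N(u) = -(λ₀ + λ₃)u⁴ + 2(λ₄ - λ₂)u³ + (λ₃ - 3λ₁)u² - λ₁`, again a polynomial with four terms and
hence at most three positive roots, so Rolle's theorem leaves at most four zeros for `M`.
-/

open Real Set Polynomial

namespace Polynomial

theorem signVariations_le_card_support_sub_one {R : Type*} [Semiring R] [LinearOrder R]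
    (P : R[X]) : P.signVariations ≤ P.support.card - 1 := by
  unfold signVariations
  gcongr
  refine (List.destutter_sublist _ _).length_le.trans ?_
  rw [List.filter_map, List.length_map, coeffList, List.filter_map, List.length_map,
    ← List.toFinset_card_of_nodup ((List.nodup_reverse.2 List.nodup_range).filter _)]
  refine Finset.card_le_card fun i hi ↦ mem_support_iff.2 fun h ↦ ?_
  simp [h] at hi

theorem encard_setOf_pos_eval_eq_zero_le {R : Type*} [CommRing R] [LinearOrder R]
    [IsStrictOrderedRing R] {P : R[X]} (hP : P ≠ 0) :
    {x ∈ Ioi 0 | P.eval x = 0}.encard ≤ (P.support.card - 1 : ℕ) := by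
  have hroots : {x ∈ Ioi 0 | P.eval x = 0} = ↑(P.roots.filter (0 < ·)).toFinset := by
    ext x
    simp [hP, and_comm]
  rw [hroots, encard_coe_eq_coe_finsetCard, Nat.cast_le]
  calc _ ≤ P.roots.countP (0 < ·) :=
        (Multiset.toFinset_card_le _).trans (Multiset.countP_eq_card_filter _ _).ge
    _ ≤ P.signVariations := P.roots_countP_pos_le_signVariations
    _ ≤ _ := P.signVariations_le_card_support_sub_one

theorem card_support_add_le {R : Type*} [Semiring R] (p q : R[X]) :
    (p + q).support.card ≤ p.support.card + q.support.card :=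
  (Finset.card_le_card support_add).trans (Finset.card_union_le _ _)

theorem card_support_four_monomials_le {R : Type*} [Semiring R] (a b c d : R) (i j k l : ℕ) :
    (C a * X ^ i + C b * X ^ j + C c * X ^ k + C d * X ^ l).support.card ≤ 4 := by
  refine (card_support_add_le _ _).trans ?_
  grw [card_support_add_le, card_support_add_le, card_support_C_mul_X_pow_le_one,
    card_support_C_mul_X_pow_le_one, card_support_C_mul_X_pow_le_one,
    card_support_C_mul_X_pow_le_one]

end Polynomial

theorem encard_setOf_pos_four_terms_eq_zero_le {R : Type*} [CommRing R] [LinearOrder R]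
    [IsStrictOrderedRing R] {a b c d : R} {i j k l : ℕ} (hijkl : [i, j, k, l].Nodup)
    (habcd : ¬(a = 0 ∧ b = 0 ∧ c = 0 ∧ d = 0)) :
    {x ∈ Ioi 0 | a * x ^ i + b * x ^ j + c * x ^ k + d * x ^ l = 0}.encard ≤ 3 := by
  set P : R[X] := C a * X ^ i + C b * X ^ j + C c * X ^ k + C d * X ^ l with hPdef
  have hP0 : P ≠ 0 := fun h ↦ habcd <| by
    simp only [List.nodup_cons, List.mem_cons, List.not_mem_nil, List.nodup_nil, or_false,
      not_or] at hijkl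
    obtain ⟨⟨hij, hik, hil⟩, ⟨hjk, hjl⟩, hkl, -⟩ := hijkl
    have hcoeff := fun n ↦ congrArg (coeff · n) h
    simp only [hPdef, coeff_add, coeff_C_mul_X_pow, coeff_zero] at hcoeff
    refine ⟨?_, ?_, ?_, ?_⟩
    · simpa [hij, hik, hil] using hcoeff i
    · simpa [Ne.symm hij, hjk, hjl] using hcoeff j
    · simpa [Ne.symm hik, Ne.symm hjk, hkl] using hcoeff k
    · simpa [Ne.symm hil, Ne.symm hjl, Ne.symm hkl] using hcoeff l
  have := (encard_setOf_pos_eval_eq_zero_le hP0).trans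
    (Nat.cast_le.2 (Nat.sub_le_sub_right (card_support_four_monomials_le a b c d i j k l) 1))
  simpa [hPdef] using this

theorem Set.sep_div_eq_zero_of_ne_zero {α β : Type*} [GroupWithZero β] {s : Set α}
    {f g : α → β} (hg : ∀ x ∈ s, g x ≠ 0) :
    {x ∈ s | f x / g x = 0} = {x ∈ s | f x = 0} := by
  ext x
  simp +contextual [hg]

theorem encard_setOf_eq_zero_le_encard_deriv_add_one {f f' : ℝ → ℝ} {s : Set ℝ}
    (hs : s.OrdConnected) (hf : ∀ x ∈ s, HasDerivAt f (f' x) x) :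
    {x ∈ s | f x = 0}.encard ≤ {x ∈ s | f' x = 0}.encard + 1 := by
  rcases {x ∈ s | f' x = 0}.finite_or_infinite with hZ' | hZ'
  · have hcard : ∀ t : Finset ℝ, ↑t ⊆ {x ∈ s | f x = 0} → t.card ≤ hZ'.toFinset.card + 1 :=
      fun t ht ↦ Finset.card_le_of_interleaved fun x hx y hy hxy _ ↦ by
        obtain ⟨⟨hxs, hfx⟩, hys, hfy⟩ := And.intro (ht hx) (ht hy)
        have hsub : Icc x y ⊆ s := hs.out hxs hys
        obtain ⟨z, hz, hf'z⟩ := exists_hasDerivAt_eq_zero hxy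
          (fun z hz ↦ (hf z (hsub hz)).continuousAt.continuousWithinAt) (hfx.trans hfy.symm)
          fun z hz ↦ hf z (hsub (Ioo_subset_Icc_self hz))
        exact ⟨z, hZ'.mem_toFinset.2 ⟨hsub (Ioo_subset_Icc_self hz), hf'z⟩, hz⟩
    rw [hZ'.encard_eq_coe_toFinset_card]
    by_contra! hlt
    obtain ⟨t, ht, htcard⟩ := exists_subset_encard_eq (Order.add_one_le_of_lt hlt)
    have htfin : t.Finite := finite_of_encard_eq_coe htcard
    have := hcard htfin.toFinset (by simpa using ht)
    rw [htfin.encard_eq_coe_toFinset_card] at htcard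
    norm_cast at htcard
    omega
  · simp [hZ'.encard_eq]

theorem hasDerivAt_integral_sqrt_one_sub_sq {u : ℝ} (hu : 0 < u) :
    HasDerivAt (fun v ↦ ∫ t in (0:ℝ)..1 / √(1 + v ^ 2), √(1 - t ^ 2))
      (-u ^ 2 / (1 + u ^ 2) ^ 2) u := by
  have hcont : Continuous fun t : ℝ ↦ √(1 - t ^ 2) := by fun_prop
  have hpos : 0 < 1 + u ^ 2 := by positivity
  have hinner : HasDerivAt (fun v : ℝ ↦ 1 / √(1 + v ^ 2))
      (-(2 * u / (2 * √(1 + u ^ 2))) / √(1 + u ^ 2) ^ 2) u := by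
    simp only [one_div]
    exact ((((hasDerivAt_pow 2 u).const_add 1).sqrt hpos.ne').inv (by positivity)).congr_deriv
      (by ring)
  have hsqrt : √(1 - (1 / √(1 + u ^ 2)) ^ 2) = u / √(1 + u ^ 2) := by
    rw [div_pow, one_pow, sq_sqrt hpos.le, sqrt_eq_iff_mul_self_eq_of_pos (by positivity)]
    field_simp
    rw [sq_sqrt hpos.le]
    ring
  refine ((intervalIntegral.integral_hasDerivAt_right (hcont.intervalIntegrable _ _)
    (hcont.stronglyMeasurableAtFilter _ _) hcont.continuousAt).comp u hinner).congr_deriv ?_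
  rw [hsqrt]
  field_simp
  rw [show √(1 + u ^ 2) ^ 4 = (√(1 + u ^ 2) ^ 2) ^ 2 by ring, sq_sqrt hpos.le]

theorem hasDerivAt_div_quartic {F : ℝ → ℝ} {u : ℝ} (hu : 0 < u)
    (hF : HasDerivAt F (-u ^ 2 / (1 + u ^ 2) ^ 2) u) (l0 l1 l2 l3 l4 : ℝ) :
    HasDerivAt (fun v ↦ (l4 * v ^ 4 + l3 * v ^ 3 + l2 * v ^ 2 + l1 * v +
        l0 * (v ^ 4 + v ^ 2) * F v) / (v ^ 4 + v ^ 2))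
      ((-(l0 + l3) * u ^ 4 + 2 * (l4 - l2) * u ^ 3 + (l3 - 3 * l1) * u ^ 2 - l1) /
        (u ^ 2 * (1 + u ^ 2) ^ 2)) u := by
  have hquartic : HasDerivAt (fun v ↦ v ^ 4 + v ^ 2) (4 * u ^ 3 + 2 * u) u := by
    simpa using (hasDerivAt_pow 4 u).fun_add (hasDerivAt_pow 2 u)
  have hnum : HasDerivAt (fun v ↦ l4 * v ^ 4 + l3 * v ^ 3 + l2 * v ^ 2 + l1 * v +
      l0 * (v ^ 4 + v ^ 2) * F v) (4 * l4 * u ^ 3 + 3 * l3 * u ^ 2 + 2 * l2 * u + l1 +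
      l0 * ((4 * u ^ 3 + 2 * u) * F u + (u ^ 4 + u ^ 2) * (-u ^ 2 / (1 + u ^ 2) ^ 2))) u := by
    refine (((((hasDerivAt_pow 4 u).const_mul l4).fun_add
      ((hasDerivAt_pow 3 u).const_mul l3)).fun_add ((hasDerivAt_pow 2 u).const_mul l2)).fun_add
      ((hasDerivAt_id' u).const_mul l1)).fun_add ((hquartic.const_mul l0).fun_mul hF)
      |>.congr_deriv ?_
    norm_num
    ring
  refine (hnum.div hquartic (by positivity)).congr_deriv ?_
  field_simp
  ring

theorem stmt_15
    (F : ℝ → ℝ)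
    (hF : ∀ u, F u = ∫ t in (0:ℝ)..(1 / Real.sqrt (1 + u ^ 2)),
      Real.sqrt (1 - t ^ 2))
    (l0 l1 l2 l3 l4 : ℝ)
    (M : ℝ → ℝ)
    (hM : ∀ u, M u = l4 * u ^ 4 + l3 * u ^ 3 + l2 * u ^ 2 + l1 * u +
      l0 * (u ^ 4 + u ^ 2) * F u)
    (hne : ¬ (l0 = 0 ∧ l1 = 0 ∧ l2 = 0 ∧ l3 = 0 ∧ l4 = 0)) :
    {u : ℝ | u ∈ Set.Ioi (0:ℝ) ∧ M u = 0}.Finite ∧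
    {u : ℝ | u ∈ Set.Ioi (0:ℝ) ∧ M u = 0}.ncard ≤ 4 := by
  rw [← encard_le_coe_iff_finite_ncard_le]
  by_cases hl0 : l0 = 0
  · calc {u ∈ Ioi 0 | M u = 0}.encard
          = {u ∈ Ioi 0 | l4 * u ^ 4 + l3 * u ^ 3 + l2 * u ^ 2 + l1 * u ^ 1 = 0}.encard := by
          simp [hM, hl0]
      _ ≤ 3 := encard_setOf_pos_four_terms_eq_zero_le (by decide)
          fun ⟨h4, h3, h2, h1⟩ ↦ hne ⟨hl0, h1, h2, h3, h4⟩
      _ ≤ 4 := by norm_num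
  · have hderiv : ∀ u ∈ Ioi (0:ℝ), HasDerivAt (fun v ↦ M v / (v ^ 4 + v ^ 2))
        ((-(l0 + l3) * u ^ 4 + 2 * (l4 - l2) * u ^ 3 + (l3 - 3 * l1) * u ^ 2 - l1) /
          (u ^ 2 * (1 + u ^ 2) ^ 2)) u := fun u hu ↦ by
      rw [show M = _ from funext hM]
      exact hasDerivAt_div_quartic hu (funext hF ▸ hasDerivAt_integral_sqrt_one_sub_sq hu) ..
    calc {u ∈ Ioi 0 | M u = 0}.encard = {u ∈ Ioi 0 | M u / (u ^ 4 + u ^ 2) = 0}.encard := by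
          rw [sep_div_eq_zero_of_ne_zero (s := Ioi 0) fun u (hu : 0 < u) ↦ by positivity]
      _ ≤ _ + 1 := encard_setOf_eq_zero_le_encard_deriv_add_one ordConnected_Ioi hderiv
      _ = {u ∈ Ioi 0 | -(l0 + l3) * u ^ 4 + 2 * (l4 - l2) * u ^ 3 + (l3 - 3 * l1) * u ^ 2
          + -l1 * u ^ 0 = 0}.encard + 1 := by
          rw [sep_div_eq_zero_of_ne_zero (s := Ioi 0) fun u (hu : 0 < u) ↦ by positivity]
          simp [sub_eq_add_neg]
      _ ≤ 3 + 1 := by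
          grw [encard_setOf_pos_four_terms_eq_zero_le (by decide)
            fun ⟨h4, _, h2, h0⟩ ↦ hl0 (by linarith)]
      _ = 4 := rfl
end

section
/- For any real constants a, b, c, d, the function M(u) = a·u + b·(u^2+u^4) + c·u^3 + d·(u^4+u^2)·F(u), where F(u) = ∫_0^{1/sqrt(1+u^2)} sqrt(1-t^2) dt, has at most 3 zeros (with multiplicity) in (0,∞), since d/du [M(u)/(u^2+u^4)] = -(2/(u+u^3)^2)·(A u^4 + B u^2 + C) for suitable constants A, B, C depending linearly on a, b, c, d. -/
/-!
`reducedM a b c d F u = M u / (u ^ 2 + u ^ 4)` has derivative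
`-((c + d) * u ^ 4 + (3 * a - c) * u ^ 2 + a) / (u + u ^ 3) ^ 2`, since
`F' u = -u ^ 2 / (1 + u ^ 2) ^ 2`. The numerator is a quadratic in `u ^ 2`, so unless
`a = c = d = 0` it vanishes at most twice on `(0, ∞)`, and Rolle's theorem leaves at most three
positive zeros for `reducedM`, which are those of `M`. If `a = c = d = 0`, then
`M u = b * (u ^ 2 + u ^ 4)` with `b ≠ 0` has no positive zero.
-/

open Real intervalIntegral Set

theorem encard_zeros_le_encard_zeros_deriv_add_one {s : Set ℝ} [s.OrdConnected]
    {f f' : ℝ → ℝ} (hf : ∀ x ∈ s, HasDerivAt f (f' x) x) :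
    {x ∈ s | f x = 0}.encard ≤ {x ∈ s | f' x = 0}.encard + 1 := by
  rcases {x ∈ s | f' x = 0}.finite_or_infinite with hfin | hinf
  swap
  · simp [hinf.encard_eq]
  by_contra! hlt
  rw [hfin.encard_eq_coe_toFinset_card] at hlt
  obtain ⟨T, hTZ, hTcard⟩ := exists_subset_encard_eq (Order.add_one_le_of_lt hlt)
  have hT : T.Finite := finite_of_encard_eq_coe hTcard
  have rolle : ∀ x ∈ hT.toFinset, ∀ y ∈ hT.toFinset, x < y →
      (∀ z ∈ hT.toFinset, z ∉ Ioo x y) → ∃ z ∈ hfin.toFinset, x < z ∧ z < y := by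
    intro x hx y hy hxy _
    simp only [Finite.mem_toFinset] at hx hy
    obtain ⟨hxs, hfx⟩ := hTZ hx
    obtain ⟨hys, hfy⟩ := hTZ hy
    have hIcc : Icc x y ⊆ s := Set.Icc_subset s hxs hys
    obtain ⟨z, hz, hf'z⟩ := exists_hasDerivAt_eq_zero hxy
      (fun w hw => (hf w (hIcc hw)).continuousAt.continuousWithinAt) (hfx.trans hfy.symm)
      (fun w hw => hf w (hIcc (Ioo_subset_Icc_self hw)))
    exact ⟨z, by simpa using ⟨hIcc (Ioo_subset_Icc_self hz), hf'z⟩, hz⟩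
  have := Finset.card_le_of_interleaved rolle
  rw [hT.encard_eq_coe_toFinset_card] at hTcard
  norm_cast at hTcard
  omega

theorem encard_setOf_quadratic_eq_zero_le_two {R : Type*} [CommRing R] [IsDomain R] {A B C : R}
    (h : ¬(A = 0 ∧ B = 0 ∧ C = 0)) : {v : R | A * v ^ 2 + B * v + C = 0}.encard ≤ 2 := by
  classical
  set p : Polynomial R := .C A * .X ^ 2 + .C B * .X + .C C
  have hp : p ≠ 0 := by
    contrapose! h
    refine ⟨?_, ?_, ?_⟩
    · simpa [p] using congrArg (Polynomial.coeff · 2) h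
    · simpa [p] using congrArg (Polynomial.coeff · 1) h
    · simpa [p] using congrArg (Polynomial.coeff · 0) h
  have hroots : {v : R | A * v ^ 2 + B * v + C = 0} = ↑p.roots.toFinset := by
    ext v
    simp [p, hp]
  rw [hroots, encard_coe_eq_coe_finsetCard]
  exact_mod_cast (p.roots.toFinset_card_le.trans p.card_roots').trans
    Polynomial.natDegree_quadratic_le

theorem encard_pos_setOf_quadratic_sq_eq_zero_le_two {A B C : ℝ}
    (h : ¬(A = 0 ∧ B = 0 ∧ C = 0)) :
    {x ∈ Ioi (0 : ℝ) | A * (x ^ 2) ^ 2 + B * x ^ 2 + C = 0}.encard ≤ 2 := by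
  have hinj : InjOn (· ^ 2 : ℝ → ℝ) {x ∈ Ioi (0 : ℝ) | A * (x ^ 2) ^ 2 + B * x ^ 2 + C = 0} :=
    (pow_left_strictMonoOn₀ two_ne_zero).injOn.mono fun x hx => le_of_lt hx.1
  rw [← hinj.encard_image]
  refine (encard_le_encard ?_).trans (encard_setOf_quadratic_eq_zero_le_two h)
  rintro _ ⟨x, ⟨-, hx⟩, rfl⟩
  exact hx

theorem hasDerivAt_one_div_sqrt_one_add_sq (u : ℝ) :
    HasDerivAt (fun v : ℝ => 1 / √(1 + v ^ 2)) (-u / ((1 + u ^ 2) * √(1 + u ^ 2))) u := by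
  have h1u : 0 < 1 + u ^ 2 := by positivity
  have hsqrt : HasDerivAt (fun v : ℝ => √(1 + v ^ 2)) (u / √(1 + u ^ 2)) u :=
    (((hasDerivAt_pow 2 u).const_add 1).sqrt h1u.ne').congr_deriv (by field_simp; ring)
  refine ((hasDerivAt_const u (1 : ℝ)).div hsqrt (sqrt_pos.2 h1u).ne').congr_deriv ?_
  rw [sq_sqrt h1u.le]
  field_simp
  ring

theorem sqrt_one_sub_sq_one_div_sqrt_one_add_sq {u : ℝ} (hu : 0 ≤ u) :
    √(1 - (1 / √(1 + u ^ 2)) ^ 2) = u / √(1 + u ^ 2) := by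
  have h1u : 0 < 1 + u ^ 2 := by positivity
  rw [div_pow, sq_sqrt h1u.le, one_pow, one_sub_div h1u.ne', add_sub_cancel_left,
    sqrt_div (sq_nonneg u), sqrt_sq hu]

theorem hasDerivAt_integral_sqrt_one_sub_sq_one_div_sqrt_one_add_sq {u : ℝ} (hu : 0 ≤ u) :
    HasDerivAt (fun v : ℝ => ∫ t in (0 : ℝ)..(1 / √(1 + v ^ 2)), √(1 - t ^ 2))
      (-u ^ 2 / (1 + u ^ 2) ^ 2) u := by
  have h1u : 0 < 1 + u ^ 2 := by positivity
  have hcont : Continuous fun t : ℝ => √(1 - t ^ 2) := by fun_prop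
  have hFTC := integral_hasDerivAt_right (hcont.intervalIntegrable 0 (1 / √(1 + u ^ 2)))
    (hcont.stronglyMeasurableAtFilter _ _) hcont.continuousAt
  refine (hFTC.comp u (hasDerivAt_one_div_sqrt_one_add_sq u)).congr_deriv ?_
  rw [sqrt_one_sub_sq_one_div_sqrt_one_add_sq hu]
  field_simp
  rw [sq_sqrt h1u.le]

noncomputable def reducedM (a b c d : ℝ) (F : ℝ → ℝ) (u : ℝ) : ℝ :=
  a / (u + u ^ 3) + b + c * u / (1 + u ^ 2) + d * F u

theorem hasDerivAt_reducedM {F : ℝ → ℝ} (a b c d : ℝ) {u : ℝ} (hu : 0 < u)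
    (hF : HasDerivAt F (-u ^ 2 / (1 + u ^ 2) ^ 2) u) :
    HasDerivAt (reducedM a b c d F)
      (-((c + d) * (u ^ 2) ^ 2 + (3 * a - c) * u ^ 2 + a) / (u + u ^ 3) ^ 2) u := by
  have h1 : HasDerivAt (fun v : ℝ => v + v ^ 3) (1 + 3 * u ^ 2) u :=
    ((hasDerivAt_id u).add (hasDerivAt_pow 3 u)).congr_deriv (by simp)
  have h2 : HasDerivAt (fun v : ℝ => 1 + v ^ 2) (2 * u) u := by
    simpa using (hasDerivAt_pow 2 u).const_add 1
  have hA := (hasDerivAt_const u a).div h1 (by positivity)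
  have hC := ((hasDerivAt_id' u).const_mul c).fun_div h2 (by positivity)
  refine (((hA.add_const b).add hC).add (hF.const_mul d)).congr_deriv ?_
  field_simp
  ring

theorem encard_pos_zeros_reducedM_le_three {F : ℝ → ℝ} {a b c d : ℝ}
    (habcd : ¬(a = 0 ∧ b = 0 ∧ c = 0 ∧ d = 0))
    (hF : ∀ u, 0 < u → HasDerivAt F (-u ^ 2 / (1 + u ^ 2) ^ 2) u) :
    {u ∈ Ioi 0 | reducedM a b c d F u = 0}.encard ≤ 3 := by
  by_cases hdeg : c + d = 0 ∧ 3 * a - c = 0 ∧ a = 0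
  · obtain ⟨ha, hc, hd⟩ : a = 0 ∧ c = 0 ∧ d = 0 := ⟨hdeg.2.2, by linarith, by linarith⟩
    have hb : b ≠ 0 := fun hb => habcd ⟨ha, hb, hc, hd⟩
    have hempty : {u ∈ Ioi 0 | reducedM a b c d F u = 0} = ∅ := by
      ext u
      simp [reducedM, ha, hc, hd, hb]
    rw [hempty, encard_empty]
    norm_num
  calc {u ∈ Ioi 0 | reducedM a b c d F u = 0}.encard
      ≤ {u ∈ Ioi 0 | -((c + d) * (u ^ 2) ^ 2 + (3 * a - c) * u ^ 2 + a) / (u + u ^ 3) ^ 2 = 0}.encard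
        + 1 :=
        encard_zeros_le_encard_zeros_deriv_add_one fun u (hu : 0 < u) =>
          hasDerivAt_reducedM a b c d hu (hF u hu)
    _ ≤ 2 + 1 := by
      gcongr
      refine (encard_le_encard ?_).trans (encard_pos_setOf_quadratic_sq_eq_zero_le_two hdeg)
      rintro u ⟨hu : 0 < u, hu0⟩
      have hden : (u + u ^ 3) ^ 2 ≠ 0 := by positivity
      exact ⟨hu, neg_eq_zero.1 ((div_eq_zero_iff.1 hu0).resolve_right hden)⟩
    _ = 3 := by norm_num

theorem stmt_18
    (F : ℝ → ℝ)
    (hF : ∀ u, F u = ∫ t in (0:ℝ)..(1 / Real.sqrt (1 + u ^ 2)),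
      Real.sqrt (1 - t ^ 2))
    (a b c d : ℝ) (habcd : ¬ (a = 0 ∧ b = 0 ∧ c = 0 ∧ d = 0))
    (M : ℝ → ℝ)
    (hM : ∀ u, M u = a * u + b * (u ^ 2 + u ^ 4) + c * u ^ 3 +
      d * (u ^ 4 + u ^ 2) * F u) :
    {u : ℝ | u ∈ Set.Ioi (0:ℝ) ∧ M u = 0}.Finite ∧
    {u : ℝ | u ∈ Set.Ioi (0:ℝ) ∧ M u = 0}.ncard ≤ 3 := by
  have hzeros : {u : ℝ | u ∈ Ioi 0 ∧ M u = 0} =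
      {u ∈ Ioi 0 | reducedM a b c d F u = 0} := by
    ext u
    refine and_congr_right fun (hu : 0 < u) => ?_
    have hMG : M u = (u ^ 2 + u ^ 4) * reducedM a b c d F u := by
      rw [hM, reducedM]
      field_simp
      ring
    rw [hMG, mul_eq_zero, or_iff_right (by positivity)]
  rw [← encard_le_coe_iff_finite_ncard_le, hzeros]
  refine encard_pos_zeros_reducedM_le_three habcd fun u hu => ?_
  rw [funext hF]
  exact hasDerivAt_integral_sqrt_one_sub_sq_one_div_sqrt_one_add_sq hu.le
end
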